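/- arXiv:1611.07605 — 10 statements merged into one kernel-verified Lean document; each statement's English description precedes it below -/
import Mathlib

section
/- Let f : 2^V → ℝ be a monotone nondecreasing submodular function with f(∅) = 0 on a finite set V. For s ∈ {0,…,|V|}, define the curvature κ(s) as the largest nonnegative number such that (1 - κ(s))·f({x}) ≤ f(X) - f(X \ {x}) for all X with |X| = s and x ∈ X. Then κ(s) is monotone nondecreasing in s, i.e., κ(s) ≤ κ(s+1) for all s with 1 ≤ s ≤ |V| - 1. -/
/-- The curvature κ(s) of a monotone nondecreasing submodular function is
nondecreasing in s. -/
theorem stmt1 {V : Type*} [DecidableEq V] [Fintype V]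
    (f : Finset V → ℝ)
    (hmono : ∀ X Y : Finset V, X ⊆ Y → f X ≤ f Y)
    (hsub : ∀ X Y : Finset V, f X + f Y ≥ f (X ∩ Y) + f (X ∪ Y))
    (hempty : f ∅ = 0)
    (hpos : ∀ x : V, 0 < f {x})
    (κ : ℕ → ℝ)
    (hκ : ∀ s : ℕ, κ s = 1 - sInf {r : ℝ | ∃ (X : Finset V) (x : V),
        X.card = s ∧ x ∈ X ∧ r = (f X - f (X.erase x)) / f {x}}) :
    ∀ s : ℕ, 1 ≤ s → s + 1 ≤ Fintype.card V → κ s ≤ κ (s + 1) := by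
  intro s hs1 hsV
  rw [hκ s, hκ (s + 1)]
  set S : ℕ → Set ℝ := fun t => {r : ℝ | ∃ (X : Finset V) (x : V),
      X.card = t ∧ x ∈ X ∧ r = (f X - f (X.erase x)) / f {x}} with hS
  have hbdd : ∀ t, BddBelow (S t) := by
    intro t
    refine ⟨0, ?_⟩
    rintro r ⟨X, x, hc, hx, rfl⟩
    exact div_nonneg (by linarith [hmono (X.erase x) X (Finset.erase_subset x X)])
      (hpos x).le
  -- nonemptiness of S s
  obtain ⟨X₀, hX₀sub, hX₀card⟩ := Finset.exists_subset_card_eq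
    (show s ≤ (Finset.univ : Finset V).card by simp; omega)
  obtain ⟨x₀, hx₀⟩ := Finset.card_pos.mp (by omega : 0 < X₀.card)
  have hne : (S s).Nonempty := ⟨_, X₀, x₀, hX₀card, hx₀, rfl⟩
  have key : sInf (S (s + 1)) ≤ sInf (S s) := by
    apply le_csInf hne
    rintro r ⟨X, x, hc, hx, rfl⟩
    -- pick y ∉ X
    have : X.card < Fintype.card V := by omega
    obtain ⟨y, hy⟩ : ∃ y, y ∉ X := by
      by_contra h
      push_neg at h
      have := Finset.card_le_card (fun z _ => h z : (Finset.univ : Finset V) ⊆ X)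
      simp at this
      omega
    have hxy : x ≠ y := fun h => hy (h ▸ hx)
    have hcard' : (insert y X).card = s + 1 := by
      rw [Finset.card_insert_of_notMem hy, hc]
    have hmem' : x ∈ insert y X := Finset.mem_insert_of_mem hx
    have hr' : ((f (insert y X) - f ((insert y X).erase x)) / f {x}) ∈ S (s + 1) :=
      ⟨insert y X, x, hcard', hmem', rfl⟩
    refine le_trans (csInf_le (hbdd _) hr') ?_
    have herase : (insert y X).erase x = insert y (X.erase x) :=
      Finset.erase_insert_of_ne hxy.symm
    have hinter : X ∩ insert y (X.erase x) = X.erase x := by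
      ext z
      simp only [Finset.mem_inter, Finset.mem_insert, Finset.mem_erase]
      constructor
      · rintro ⟨hzX, rfl | hz⟩
        · exact absurd hzX hy
        · exact hz
      · rintro ⟨hzx, hzX⟩; exact ⟨hzX, Or.inr ⟨hzx, hzX⟩⟩
    have hunion : X ∪ insert y (X.erase x) = insert y X := by
      ext z
      simp only [Finset.mem_union, Finset.mem_insert, Finset.mem_erase]
      tauto
    have hnum : f (insert y X) - f ((insert y X).erase x) ≤ f X - f (X.erase x) := by
      have h := hsub X (insert y (X.erase x))
      rw [hinter, hunion] at h
      rw [herase]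
      linarith
    exact (div_le_div_iff_of_pos_right (hpos x)).mpr hnum
  linarith
end

section
/- Let G = (V ∪ W, E) be a bipartite graph with activation probabilities q : E → [0,1], and let f(X) = γ · Σ_{w ∈ W} Q(X, w) where Q(X,w) = 1 - ∏_{x ∈ X, (x,w) ∈ E}(1 - q(x,w)) and γ > 0. Then for any X ⊆ V with |X| = s and x ∈ X with f({x}) > 0, we have (f(X) - f(X \ {x}))/f({x}) ≥ 1 - max_{w : (x,w) ∈ E} Q(X \ {x}, w). Consequently the curvature κ(s) satisfies κ(s) ≤ max over |X| = s, x ∈ X, (x,w) ∈ E of Q(X \ {x}, w). -/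
/-!
Removing `x` from `X` lowers the coverage probability of a neighbour `w` of `x` by
`q(x,w) · (1 - Q(X \ {x}, w))`, and leaves the other targets untouched, while `f {x}` is
`γ · Σ_w q(x,w)`. Hence the marginal ratio `(f X - f (X \ {x})) / f {x}` is the average of
`1 - Q(X \ {x}, w)` over the neighbours `w` of `x`, weighted by `q(x,w)`, so it is at least the
smallest of these values. Taking the infimum over all `(X, x)` bounds the curvature.
-/

open Finset

theorem le_sum_mul_div_sum {ι : Type*} {s : Finset ι} {a g : ι → ℝ} {c : ℝ}
    (ha : ∀ i ∈ s, 0 ≤ a i) (hsum : 0 < ∑ i ∈ s, a i) (hc : ∀ i ∈ s, c ≤ g i) :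
    c ≤ (∑ i ∈ s, a i * g i) / ∑ i ∈ s, a i := by
  rw [le_div_iff₀ hsum, mul_comm, sum_mul]
  exact sum_le_sum fun i hi => mul_le_mul_of_nonneg_left (hc i hi) (ha i hi)

theorem one_sub_csInf_le_csSup {R S : Set ℝ} (hR : R.Nonempty) (hS : BddAbove S)
    (h : ∀ r ∈ R, ∃ t ∈ S, 1 - t ≤ r) : 1 - sInf R ≤ sSup S := by
  have : 1 - sSup S ≤ sInf R := le_csInf hR fun r hr => by
    obtain ⟨t, ht, htr⟩ := h r hr
    linarith [le_csSup hS ht]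
  linarith

namespace BipartiteInfluence

variable {V W : Type*} [DecidableEq V] [DecidableEq W] (E : Finset (V × W)) (q : V × W → ℝ)

/-- `Q(X, w)`: the probability that `w` is activated by some element of `X`. -/
def coverProb (X : Finset V) (w : W) : ℝ :=
  1 - ∏ x ∈ X.filter (fun x => (x, w) ∈ E), (1 - q (x, w))

/-- `f / γ`. -/
def influence [Fintype W] (X : Finset V) : ℝ :=
  ∑ w, coverProb E q X w

variable {E q}

@[simp]
theorem coverProb_empty (w : W) : coverProb E q ∅ w = 0 := by
  simp [coverProb]

theorem coverProb_le_one (hq : ∀ e ∈ E, q e ≤ 1) (X : Finset V) (w : W) :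
    coverProb E q X w ≤ 1 := by
  have : 0 ≤ ∏ x ∈ X.filter (fun x => (x, w) ∈ E), (1 - q (x, w)) :=
    prod_nonneg fun y hy => sub_nonneg.mpr (hq _ (mem_filter.mp hy).2)
  rw [coverProb]
  linarith

theorem coverProb_sub_coverProb_erase {X : Finset V} {x : V} (hx : x ∈ X) (w : W) :
    coverProb E q X w - coverProb E q (X.erase x) w =
      if (x, w) ∈ E then q (x, w) * (1 - coverProb E q (X.erase x) w) else 0 := by
  simp only [coverProb, filter_erase]
  split_ifs with h
  · rw [← mul_prod_erase _ _ (mem_filter.mpr ⟨hx, h⟩)]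
    ring
  · rw [erase_eq_of_notMem (by simp [h])]
    ring

theorem coverProb_singleton (x : V) (w : W) :
    coverProb E q {x} w = if (x, w) ∈ E then q (x, w) else 0 := by
  simpa using coverProb_sub_coverProb_erase (E := E) (q := q) (mem_singleton_self x) w

variable [Fintype W]

theorem influence_sub_influence_erase {X : Finset V} {x : V} (hx : x ∈ X) :
    influence E q X - influence E q (X.erase x) =
      ∑ w ∈ univ.filter (fun w => (x, w) ∈ E), q (x, w) * (1 - coverProb E q (X.erase x) w) := by
  rw [influence, influence, ← sum_sub_distrib, sum_filter]
  exact sum_congr rfl fun w _ => coverProb_sub_coverProb_erase hx w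

theorem influence_singleton (x : V) :
    influence E q {x} = ∑ w ∈ univ.filter (fun w => (x, w) ∈ E), q (x, w) := by
  rw [influence, sum_filter]
  exact sum_congr rfl fun w _ => coverProb_singleton x w

theorem one_sub_sup'_le_marginal_ratio (hq : ∀ e ∈ E, 0 ≤ q e) {X : Finset V} {x : V}
    (hx : x ∈ X) (hpos : 0 < influence E q {x})
    (hne : (univ.filter (fun w : W => (x, w) ∈ E)).Nonempty) :
    1 - (univ.filter (fun w : W => (x, w) ∈ E)).sup' hne (fun w => coverProb E q (X.erase x) w) ≤
      (influence E q X - influence E q (X.erase x)) / influence E q {x} := by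
  rw [influence_sub_influence_erase hx]
  rw [influence_singleton] at hpos ⊢
  refine le_sum_mul_div_sum (fun w hw => hq _ (mem_filter.mp hw).2) hpos fun w hw => ?_
  linarith [le_sup' (fun w => coverProb E q (X.erase x) w) hw]

theorem influence_singleton_nonneg (hq : ∀ e ∈ E, 0 ≤ q e) (x : V) :
    0 ≤ influence E q {x} := by
  rw [influence_singleton]
  exact sum_nonneg fun w hw => hq _ (mem_filter.mp hw).2

theorem nonempty_neighbours_of_influence_singleton_pos {x : V} (hpos : 0 < influence E q {x}) :
    (univ.filter (fun w : W => (x, w) ∈ E)).Nonempty := by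
  rw [influence_singleton] at hpos
  exact nonempty_of_sum_ne_zero hpos.ne'

end BipartiteInfluence

open BipartiteInfluence

theorem stmt3_general {V W : Type*} [DecidableEq V] [DecidableEq W] [Fintype V] [Fintype W]
    (E : Finset (V × W)) (q : V × W → ℝ) (γ : ℝ)
    (hq : ∀ e ∈ E, 0 ≤ q e ∧ q e ≤ 1)
    (Q : Finset V → W → ℝ)
    (hQ : ∀ (X : Finset V) (w : W),
      Q X w = 1 - ∏ x ∈ X.filter (fun x => (x, w) ∈ E), (1 - q (x, w)))
    (f : Finset V → ℝ)
    (hf : ∀ X : Finset V, f X = γ * ∑ w : W, Q X w)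
    (hpos : ∀ x : V, 0 < f {x})
    (s : ℕ) (hs1 : 1 ≤ s) (hs2 : s ≤ Fintype.card V)
    (κ : ℕ → ℝ)
    (hκ : ∀ t : ℕ, κ t = 1 - sInf {r : ℝ | ∃ (X : Finset V) (x : V),
        X.card = t ∧ x ∈ X ∧ r = (f X - f (X.erase x)) / f {x}}) :
    (∀ (X : Finset V) (x : V), X.card = s → x ∈ X →
      ∀ hne : (Finset.univ.filter (fun w : W => (x, w) ∈ E)).Nonempty,
        (f X - f (X.erase x)) / f {x} ≥
          1 - (Finset.univ.filter (fun w : W => (x, w) ∈ E)).sup' hne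
                (fun w => Q (X.erase x) w)) ∧
    κ s ≤ sSup {r : ℝ | ∃ (X : Finset V) (x : V) (w : W),
        X.card = s ∧ x ∈ X ∧ (x, w) ∈ E ∧ r = Q (X.erase x) w} := by
  obtain rfl : Q = coverProb E q := funext₂ hQ
  have hf' : ∀ X, f X = γ * influence E q X := hf
  have hinfl_nonneg := influence_singleton_nonneg fun e he => (hq e he).1
  have hinfl_pos : ∀ x : V, 0 < influence E q {x} := fun x =>
    (hinfl_nonneg x).lt_of_ne' (right_ne_zero_of_mul (hf' {x} ▸ hpos x).ne')
  have marginal : ∀ (X : Finset V) (x : V), x ∈ X →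
      ∀ hne : (univ.filter (fun w : W => (x, w) ∈ E)).Nonempty,
        1 - (univ.filter (fun w : W => (x, w) ∈ E)).sup' hne (fun w => coverProb E q (X.erase x) w)
          ≤ (f X - f (X.erase x)) / f {x} := by
    intro X x hx hne
    have hγ : γ ≠ 0 := left_ne_zero_of_mul (hf' {x} ▸ hpos x).ne'
    rw [hf', hf', hf', ← mul_sub, mul_div_mul_left _ _ hγ]
    exact one_sub_sup'_le_marginal_ratio (fun e he => (hq e he).1) hx (hinfl_pos x) hne
  refine ⟨fun X x _ hx hne => marginal X x hx hne, ?_⟩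
  rw [hκ s]
  refine one_sub_csInf_le_csSup ?_ ⟨1, ?_⟩ ?_
  · obtain ⟨X, -, hcard⟩ := exists_subset_card_eq (s := (univ : Finset V)) hs2
    obtain ⟨x, hx⟩ := card_pos.mp (hcard ▸ hs1 : 0 < X.card)
    exact ⟨_, X, x, hcard, hx, rfl⟩
  · rintro _ ⟨X, x, w, -, -, -, rfl⟩
    exact coverProb_le_one (fun e he => (hq e he).2) _ _
  · rintro _ ⟨X, x, hcard, hx, rfl⟩
    have hne := nonempty_neighbours_of_influence_singleton_pos (hinfl_pos x)
    obtain ⟨w, hw, hmax⟩ := exists_mem_eq_sup' hne fun w => coverProb E q (X.erase x) w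
    exact ⟨_, ⟨X, x, w, hcard, hx, (mem_filter.mp hw).2, rfl⟩, hmax ▸ marginal X x hx hne⟩

/-- Curvature bound for the bipartite influence model valuation (Lemma 1). -/
theorem stmt3 {V W : Type*} [DecidableEq V] [DecidableEq W] [Fintype V] [Fintype W]
    (E : Finset (V × W)) (q : V × W → ℝ) (γ : ℝ) (hγ : 0 < γ)
    (hq : ∀ e ∈ E, 0 ≤ q e ∧ q e ≤ 1)
    (Q : Finset V → W → ℝ)
    (hQ : ∀ (X : Finset V) (w : W),
      Q X w = 1 - ∏ x ∈ X.filter (fun x => (x, w) ∈ E), (1 - q (x, w)))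
    (f : Finset V → ℝ)
    (hf : ∀ X : Finset V, f X = γ * ∑ w : W, Q X w)
    (hpos : ∀ x : V, 0 < f {x})
    (s : ℕ) (hs1 : 1 ≤ s) (hs2 : s ≤ Fintype.card V)
    (κ : ℕ → ℝ)
    (hκ : ∀ t : ℕ, κ t = 1 - sInf {r : ℝ | ∃ (X : Finset V) (x : V),
        X.card = t ∧ x ∈ X ∧ r = (f X - f (X.erase x)) / f {x}}) :
    (∀ (X : Finset V) (x : V), X.card = s → x ∈ X →
      ∀ hne : (Finset.univ.filter (fun w : W => (x, w) ∈ E)).Nonempty,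
        (f X - f (X.erase x)) / f {x} ≥
          1 - (Finset.univ.filter (fun w : W => (x, w) ∈ E)).sup' hne
                (fun w => Q (X.erase x) w)) ∧
    κ s ≤ sSup {r : ℝ | ∃ (X : Finset V) (x : V) (w : W),
        X.card = s ∧ x ∈ X ∧ (x, w) ∈ E ∧ r = Q (X.erase x) w} :=
  stmt3_general E q γ hq Q hQ f hf hpos s hs1 hs2 κ hκ
end

section
/- In the bipartite influence model with valuation f(X) = γ Σ_{w∈W} Q(X,w), if q(e) ≤ q for every edge e and every right vertex w ∈ W has degree at most d, then for any X ⊆ V with |X| = s, any x ∈ X, and any w with (x,w) ∈ E, we have Q(X \ {x}, w) ≤ 1 - (1 - q)^{min{s,d} - 1}. Consequently the curvature satisfies κ(s) ≤ 1 - (1 - q)^{min{s,d} - 1}. -/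
/-!
The influence probability `Q(X, w)` is `1 - P(X, w)`, where `P(X, w)` is the probability that no
neighbour of `w` in `X` activates it, a product over those neighbours. When `(x, w)` is an edge,
`X \ {x}` contains at most `min s d - 1` neighbours of `w`, each surviving with probability at least
`1 - q̄`, so `P(X \ {x}, w) ≥ (1 - q̄)^(min s d - 1)`. Since `P(X, w) = P({x}, w) P(X \ {x}, w)`, the
marginal gain `Q(X, w) - Q(X \ {x}, w) = Q({x}, w) P(X \ {x}, w)` is at least
`(1 - q̄)^(min s d - 1) Q({x}, w)`; summing over `w` bounds every curvature ratio from below.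
-/

open Finset

lemma pow_le_prod_of_card_le {ι : Type*} (T : Finset ι) (g : ι → ℝ) {a : ℝ} {n : ℕ}
    (ha0 : 0 ≤ a) (ha1 : a ≤ 1) (hT : T.card ≤ n) (hg : ∀ i ∈ T, a ≤ g i) :
    a ^ n ≤ ∏ i ∈ T, g i :=
  calc a ^ n ≤ a ^ T.card := pow_le_pow_of_le_one ha0 ha1 hT
    _ = ∏ _i ∈ T, a := (prod_const a).symm
    _ ≤ ∏ i ∈ T, g i := prod_le_prod (fun _ _ => ha0) hg

lemma card_filter_erase_le_min_sub_one {α : Type*} [Fintype α] [DecidableEq α] {A : Finset α}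
    {p : α → Prop} [DecidablePred p] {x : α} (hx : x ∈ A) (hpx : p x) :
    ((A.erase x).filter p).card ≤ min A.card (univ.filter p).card - 1 := by
  have hA : ((A.erase x).filter p).card ≤ A.card - 1 :=
    (card_filter_le _ _).trans (card_erase_of_mem hx).le
  have hp : ((A.erase x).filter p).card ≤ (univ.filter p).card - 1 := by
    rw [← card_erase_of_mem (mem_filter.2 ⟨mem_univ x, hpx⟩)]
    exact card_le_card fun v hv => by
      simp only [mem_filter, mem_erase] at hv ⊢
      exact ⟨hv.1.1, mem_univ v, hv.2⟩
  omega

section InfluenceModel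

variable {V W : Type*} [DecidableEq V] [DecidableEq W] (E : Finset (V × W)) (q : V × W → ℝ)

/-- The probability that no vertex of `X` activates `w`, i.e. `1 - Q(X, w)`. -/
def notInfluencedProb (X : Finset V) (w : W) : ℝ :=
  ∏ x ∈ X.filter (fun x => (x, w) ∈ E), (1 - q (x, w))

lemma notInfluencedProb_eq_mul_erase {X : Finset V} {x : V} (hx : x ∈ X) (w : W) :
    notInfluencedProb E q X w
      = notInfluencedProb E q {x} w * notInfluencedProb E q (X.erase x) w := by
  simp only [notInfluencedProb, prod_filter, prod_singleton]
  exact (mul_prod_erase X _ hx).symm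

lemma notInfluencedProb_singleton_le_one (hq : ∀ e ∈ E, 0 ≤ q e) (x : V) (w : W) :
    notInfluencedProb E q {x} w ≤ 1 := by
  by_cases hxw : (x, w) ∈ E
  · simp [notInfluencedProb, filter_singleton, hxw, hq _ hxw]
  · simp [notInfluencedProb, filter_singleton, hxw]

lemma pow_le_notInfluencedProb_erase [Fintype V] {qbar : ℝ} (hqbar0 : 0 ≤ qbar)
    (hqbar1 : qbar ≤ 1) (hq : ∀ e ∈ E, q e ≤ qbar) {d : ℕ}
    (hdeg : ∀ w : W, (univ.filter (fun v : V => (v, w) ∈ E)).card ≤ d)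
    {X : Finset V} {x : V} {w : W} (hx : x ∈ X) (hxw : (x, w) ∈ E) :
    (1 - qbar) ^ (min X.card d - 1) ≤ notInfluencedProb E q (X.erase x) w := by
  refine pow_le_prod_of_card_le _ _ (by linarith) (by linarith) ?_
    fun v hv => by linarith [hq _ (mem_filter.1 hv).2]
  have := card_filter_erase_le_min_sub_one (p := fun v => (v, w) ∈ E) hx hxw
  have := hdeg w
  omega

lemma pow_mul_le_marginal [Fintype V] {qbar : ℝ} (hqbar0 : 0 ≤ qbar) (hqbar1 : qbar ≤ 1)
    (hq : ∀ e ∈ E, 0 ≤ q e ∧ q e ≤ qbar) {d : ℕ}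
    (hdeg : ∀ w : W, (univ.filter (fun v : V => (v, w) ∈ E)).card ≤ d)
    {X : Finset V} {x : V} (hx : x ∈ X) (w : W) :
    (1 - qbar) ^ (min X.card d - 1) * (1 - notInfluencedProb E q {x} w)
      ≤ (1 - notInfluencedProb E q X w) - (1 - notInfluencedProb E q (X.erase x) w) := by
  have hsolo : 0 ≤ 1 - notInfluencedProb E q {x} w :=
    sub_nonneg.2 (notInfluencedProb_singleton_le_one E q (fun e he => (hq e he).1) x w)
  rw [notInfluencedProb_eq_mul_erase E q hx, sub_sub_sub_cancel_left, ← one_sub_mul,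
    mul_comm _ (notInfluencedProb E q _ w)]
  by_cases hxw : (x, w) ∈ E
  · exact mul_le_mul_of_nonneg_right (pow_le_notInfluencedProb_erase E q hqbar0 hqbar1
      (fun e he => (hq e he).2) hdeg hx hxw) hsolo
  · have : notInfluencedProb E q {x} w = 1 := by simp [notInfluencedProb, filter_singleton, hxw]
    simp [this]

end InfluenceModel

/-- Theorem 3: if all activation probabilities are at most q̄ and right degrees
are at most d, then Q(X \ x, w) ≤ 1 - (1-q̄)^{min(s,d)-1} and hence
κ(s) ≤ 1 - (1-q̄)^{min(s,d)-1}. -/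
theorem stmt4 {V W : Type*} [DecidableEq V] [DecidableEq W] [Fintype V] [Fintype W]
    (E : Finset (V × W)) (q : V × W → ℝ) (γ : ℝ) (hγ : 0 < γ)
    (qbar : ℝ) (hqbar0 : 0 ≤ qbar) (hqbar1 : qbar ≤ 1)
    (hq : ∀ e ∈ E, 0 ≤ q e ∧ q e ≤ qbar)
    (d : ℕ)
    (hdeg : ∀ w : W, (Finset.univ.filter (fun v : V => (v, w) ∈ E)).card ≤ d)
    (Q : Finset V → W → ℝ)
    (hQ : ∀ (X : Finset V) (w : W),
      Q X w = 1 - ∏ x ∈ X.filter (fun x => (x, w) ∈ E), (1 - q (x, w)))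
    (f : Finset V → ℝ)
    (hf : ∀ X : Finset V, f X = γ * ∑ w : W, Q X w)
    (hpos : ∀ x : V, 0 < f {x})
    (s : ℕ) (hs1 : 1 ≤ s) (hs2 : s ≤ Fintype.card V)
    (κ : ℕ → ℝ)
    (hκ : ∀ t : ℕ, κ t = 1 - sInf {r : ℝ | ∃ (X : Finset V) (x : V),
        X.card = t ∧ x ∈ X ∧ r = (f X - f (X.erase x)) / f {x}}) :
    (∀ (X : Finset V) (x : V) (w : W), X.card = s → x ∈ X → (x, w) ∈ E →
        Q (X.erase x) w ≤ 1 - (1 - qbar) ^ (min s d - 1)) ∧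
    κ s ≤ 1 - (1 - qbar) ^ (min s d - 1) := by
  obtain rfl : Q = fun X w => 1 - notInfluencedProb E q X w := funext₂ hQ
  refine ⟨fun X x w hX hx hxw => ?_, ?_⟩
  · have := pow_le_notInfluencedProb_erase E q hqbar0 hqbar1 (fun e he => (hq e he).2) hdeg hx hxw
    rw [hX] at this
    linarith
  obtain ⟨X₀, -, hX₀⟩ := exists_subset_card_eq (s := (univ : Finset V)) (by simpa using hs2)
  obtain ⟨x₀, hx₀⟩ : X₀.Nonempty := card_pos.1 (by omega)
  rw [hκ, sub_le_sub_iff_left]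
  refine le_csInf ⟨_, X₀, x₀, hX₀, hx₀, rfl⟩ ?_
  rintro _ ⟨X, x, rfl, hx, rfl⟩
  rw [le_div_iff₀ (hpos x), hf, hf, hf, ← mul_sub, ← sum_sub_distrib, mul_left_comm, mul_sum]
  exact mul_le_mul_of_nonneg_left (sum_le_sum fun w _ =>
    pow_mul_le_marginal E q hqbar0 hqbar1 hq hdeg hx w) hγ.le
end

section
/- Define f : 2^V → ℝ by f(X) = H(|X|) where H(k) = Σ_{i=1}^{k} 1/i is the k-th harmonic number. Then f is monotone nondecreasing and submodular, max_X f(X) = H(|V|), and for h(X) = Σ_{x∈X}(f(X) - f(X\{x})) we have h(X) = 1 for every nonempty X ⊆ V. Hence (max_X f(X)) / (max_X h(X)) ≥ H(|V|). -/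
private lemma harm_mono (a b : ℕ) (hab : a ≤ b) :
    ∑ i ∈ Finset.range a, (1 : ℝ) / (i + 1) ≤ ∑ i ∈ Finset.range b, (1 : ℝ) / (i + 1) := by
  apply Finset.sum_le_sum_of_subset_of_nonneg (Finset.range_subset_range.2 hab)
  intro i _ _
  positivity

private lemma harm_concave (i x y u : ℕ) (hix : i ≤ x) (hxy : x ≤ y) (hsum : i + u = x + y) :
    ∑ j ∈ Finset.range u, (1 : ℝ) / (j + 1) + ∑ j ∈ Finset.range i, (1 : ℝ) / (j + 1) ≤
    ∑ j ∈ Finset.range x, (1 : ℝ) / (j + 1) + ∑ j ∈ Finset.range y, (1 : ℝ) / (j + 1) := by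
  have hyu : y ≤ u := by omega
  have split : ∀ a b : ℕ, a ≤ b → ∑ j ∈ Finset.range b, (1 : ℝ) / (j + 1)
      = ∑ j ∈ Finset.range a, (1 : ℝ) / (j + 1) + ∑ j ∈ Finset.range (b - a), (1 : ℝ) / ((a + j) + 1) := by
    intro a b hab
    rw [← Finset.sum_range_add_sum_Ico _ hab, Finset.sum_Ico_eq_sum_range]
    congr 1
    apply Finset.sum_congr rfl
    intro j _
    push_cast
    ring
  rw [split i x hix, split y u hyu]
  have hcard : u - y = x - i := by omega
  rw [hcard]
  have key : ∑ j ∈ Finset.range (x - i), (1 : ℝ) / ((y + j) + 1)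
      ≤ ∑ j ∈ Finset.range (x - i), (1 : ℝ) / ((i + j) + 1) := by
    apply Finset.sum_le_sum
    intro j _
    apply one_div_le_one_div_of_le
    · positivity
    · have : (i : ℝ) ≤ y := Nat.cast_le.2 (by omega)
      linarith
  linarith

private lemma harm_step (n : ℕ) (hn : 1 ≤ n) :
    ∑ i ∈ Finset.range n, (1 : ℝ) / (i + 1)
      - ∑ i ∈ Finset.range (n - 1), (1 : ℝ) / (i + 1) = 1 / n := by
  obtain ⟨m, rfl⟩ : ∃ m, n = m + 1 := ⟨n - 1, by omega⟩
  rw [Finset.sum_range_succ]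
  simp

/-- Theorem (harmonic example): f(X) = H(|X|) is monotone submodular,
max f = H(|V|), h(X) = 1 for nonempty X, hence (max f)/(max h) ≥ H(|V|). -/
theorem stmt7 {V : Type*} [DecidableEq V] [Fintype V] [Nonempty V]
    (H : ℕ → ℝ) (hH : ∀ k : ℕ, H k = ∑ i ∈ Finset.range k, (1 : ℝ) / (i + 1))
    (f : Finset V → ℝ) (hf : ∀ X : Finset V, f X = H X.card)
    (h : Finset V → ℝ)
    (hh : ∀ X : Finset V, h X = ∑ x ∈ X, (f X - f (X.erase x))) :
    (∀ X Y : Finset V, X ⊆ Y → f X ≤ f Y) ∧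
    (∀ X Y : Finset V, f X + f Y ≥ f (X ∩ Y) + f (X ∪ Y)) ∧
    (∀ X : Finset V, f X ≤ f Finset.univ) ∧
    f Finset.univ = H (Fintype.card V) ∧
    (∀ X : Finset V, X.Nonempty → h X = 1) ∧
    (∀ X : Finset V, h X ≤ 1) ∧
    f Finset.univ / h Finset.univ ≥ H (Fintype.card V) := by
  have mono : ∀ X Y : Finset V, X ⊆ Y → f X ≤ f Y := by
    intro X Y hXY
    rw [hf, hf, hH, hH]
    exact harm_mono _ _ (Finset.card_le_card hXY)
  have sub : ∀ X Y : Finset V, f X + f Y ≥ f (X ∩ Y) + f (X ∪ Y) := by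
    intro X Y
    have hcard : (X ∩ Y).card + (X ∪ Y).card = X.card + Y.card :=
      Finset.card_inter_add_card_union X Y
    rw [hf, hf, hf, hf, hH, hH, hH, hH]
    rcases le_total X.card Y.card with hc | hc
    · have := harm_concave (X ∩ Y).card X.card Y.card (X ∪ Y).card
        (Finset.card_le_card Finset.inter_subset_left) hc (by omega)
      linarith
    · have := harm_concave (X ∩ Y).card Y.card X.card (X ∪ Y).card
        (Finset.card_le_card Finset.inter_subset_right) hc (by omega)
      linarith
  have hone : ∀ X : Finset V, X.Nonempty → h X = 1 := by
    intro X hX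
    have hn : 1 ≤ X.card := Finset.card_pos.2 hX
    have hterm : ∀ x ∈ X, f X - f (X.erase x) = 1 / (X.card : ℝ) := by
      intro x hx
      rw [hf, hf, Finset.card_erase_of_mem hx, hH, hH]
      exact harm_step _ hn
    rw [hh, Finset.sum_congr rfl hterm, Finset.sum_const, nsmul_eq_mul]
    field_simp
  refine ⟨mono, sub, ?_, ?_, hone, ?_, ?_⟩
  · intro X
    exact mono X Finset.univ (Finset.subset_univ X)
  · rw [hf, Finset.card_univ]
  · intro X
    rcases X.eq_empty_or_nonempty with rfl | hX
    · rw [hh]; simp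
    · rw [hone X hX]
  · rw [hone Finset.univ Finset.univ_nonempty, hf, Finset.card_univ, div_one]
end

section
/- (Single-buyer approximation guarantee.) Let f : 2^V → ℝ be monotone nondecreasing submodular with f(∅)=0 and curvature κ. Let X* ⊆ V be any set, s = |X*|, and let X^s ⊆ V be a set of s elements of V with the largest singleton values f({x}) (so Σ_{x∈X^s} f({x}) ≥ Σ_{x∈X*} f({x})). Then Σ_{x∈X*}(f(X*) - f(X*\{x})) ≤ (1/(1-κ(s))) · Σ_{x∈X^s}(f(X^s) - f(X^s\{x})), provided κ(s) < 1. -/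
/-- Theorem 4 (single-buyer approximation guarantee). -/
theorem stmt10 {V : Type*} [DecidableEq V] [Fintype V]
    (f : Finset V → ℝ)
    (hmono : ∀ X Y : Finset V, X ⊆ Y → f X ≤ f Y)
    (hsub : ∀ X Y : Finset V, f X + f Y ≥ f (X ∩ Y) + f (X ∪ Y))
    (hempty : f ∅ = 0)
    (hpos : ∀ x : V, 0 < f {x})
    (s : ℕ) (κ : ℝ) (hκlt : κ < 1)
    (hκ : ∀ (X : Finset V) (x : V), X.card = s → x ∈ X →
      (1 - κ) * f {x} ≤ f X - f (X.erase x))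
    (Xstar Xs : Finset V) (hcard : Xstar.card = s) (hcards : Xs.card = s)
    (hbest : ∀ Y : Finset V, Y.card = s → ∑ x ∈ Y, f {x} ≤ ∑ x ∈ Xs, f {x}) :
    ∑ x ∈ Xstar, (f Xstar - f (Xstar.erase x)) ≤
      (1 / (1 - κ)) * ∑ x ∈ Xs, (f Xs - f (Xs.erase x)) := by
  have h1κ : (0:ℝ) < 1 - κ := by linarith
  have step1 : ∑ x ∈ Xstar, (f Xstar - f (Xstar.erase x)) ≤ ∑ x ∈ Xstar, f {x} := by
    apply Finset.sum_le_sum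
    intro x hx
    have h := hsub {x} (Xstar.erase x)
    have hint : ({x} : Finset V) ∩ Xstar.erase x = ∅ := by
      ext y; simp (config := {contextual := true}) [Finset.mem_erase, eq_comm]
    have huni : ({x} : Finset V) ∪ Xstar.erase x = Xstar := by
      rw [show ({x} : Finset V) ∪ Xstar.erase x = insert x (Xstar.erase x) from rfl, Finset.insert_erase hx]
    rw [hint, huni, hempty] at h
    linarith
  have step2 : ∑ x ∈ Xstar, f {x} ≤ ∑ x ∈ Xs, f {x} := hbest Xstar hcard
  have step3 : ∑ x ∈ Xs, f {x} ≤ (1 / (1 - κ)) * ∑ x ∈ Xs, (f Xs - f (Xs.erase x)) := by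
    rw [Finset.mul_sum]
    apply Finset.sum_le_sum
    intro x hx
    have h := hκ Xs x hcards hx
    rw [div_mul_eq_mul_div, le_div_iff₀ h1κ]
    linarith
  linarith
end

section
/- Let f₁, …, fₙ : 2^V → ℝ be monotone nondecreasing functions with f_i(∅) = 0, and define the aggregated valuation f(X) = max over partitions (X₁,…,Xₙ) of X of Σ_i f_i(X_i). If each f_i is submodular, then for any X ⊆ V and x ∈ X, f(X) - f(X \ {x}) ≤ max_i f_i({x}) = f({x}). -/
/-- Lemma 5: for the aggregated valuation f of monotone submodular valuations,
f(X) - f(X \ x) ≤ f({x}) = max_i f_i({x}). -/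
theorem stmt12 {V : Type*} [DecidableEq V] [Fintype V] (n : ℕ) [NeZero n]
    (fi : Fin n → Finset V → ℝ)
    (hmono : ∀ i, ∀ X Y : Finset V, X ⊆ Y → fi i X ≤ fi i Y)
    (hsub : ∀ i, ∀ X Y : Finset V, fi i X + fi i Y ≥ fi i (X ∩ Y) + fi i (X ∪ Y))
    (hempty : ∀ i, fi i ∅ = 0)
    (f : Finset V → ℝ)
    (hf : ∀ X : Finset V,
      f X = (Finset.univ : Finset (V → Fin n)).sup' Finset.univ_nonempty
        (fun a => ∑ i : Fin n, fi i (X.filter (fun x => a x = i)))) :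
    ∀ (X : Finset V) (x : V), x ∈ X →
      f X - f (X.erase x) ≤ f {x} ∧
      f {x} = (Finset.univ : Finset (Fin n)).sup' Finset.univ_nonempty
        (fun i => fi i {x}) := by
  intro X x hx
  -- key: for any assignment a, the singleton sum collapses
  have hsingle : ∀ a : V → Fin n,
      (∑ i : Fin n, fi i (({x} : Finset V).filter (fun y => a y = i))) = fi (a x) {x} := by
    intro a
    rw [Fintype.sum_eq_single (a x)]
    · congr 1
      ext y
      simp only [Finset.mem_filter, Finset.mem_singleton]
      constructor
      · rintro ⟨h, _⟩; exact h
      · rintro rfl; exact ⟨rfl, rfl⟩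
    · intro i hi
      have : ({x} : Finset V).filter (fun y => a y = i) = ∅ := by
        ext y
        simp only [Finset.mem_filter, Finset.mem_singleton, Finset.notMem_empty, iff_false]
        rintro ⟨rfl, h⟩
        exact hi h.symm
      rw [this, hempty]
  have hM : f {x} = (Finset.univ : Finset (Fin n)).sup' Finset.univ_nonempty
      (fun i => fi i {x}) := by
    rw [hf]
    apply le_antisymm
    · apply Finset.sup'_le
      intro a _
      rw [hsingle a]
      exact Finset.le_sup' (fun i : Fin n => fi i {x}) (Finset.mem_univ (a x))
    · apply Finset.sup'_le
      intro i _
      have := Finset.le_sup'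
        (fun a : V → Fin n => ∑ j : Fin n, fi j (({x} : Finset V).filter (fun y => a y = j)))
        (Finset.mem_univ (fun _ : V => i))
      calc fi i {x} = ∑ j : Fin n, fi j (({x} : Finset V).filter (fun y => (fun _ : V => i) y = j)) := (hsingle (fun _ => i)).symm
        _ ≤ _ := this
  refine ⟨?_, hM⟩
  obtain ⟨a, -, ha⟩ := Finset.exists_mem_eq_sup' (Finset.univ_nonempty)
    (fun a : V → Fin n => ∑ i : Fin n, fi i (X.filter (fun y => a y = i)))
  have hXf : f X = ∑ i : Fin n, fi i (X.filter (fun y => a y = i)) := by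
    rw [hf]; exact ha
  have hE : (∑ i : Fin n, fi i ((X.erase x).filter (fun y => a y = i))) ≤ f (X.erase x) := by
    rw [hf]
    exact Finset.le_sup'
      (fun b : V → Fin n => ∑ i : Fin n, fi i ((X.erase x).filter (fun y => b y = i)))
      (Finset.mem_univ a)
  set S := X.filter (fun y => a y = a x) with hS
  have hxS : x ∈ S := by simp [hS, hx]
  have hfe : ∀ i : Fin n, (X.erase x).filter (fun y => a y = i)
      = (X.filter (fun y => a y = i)).erase x := by
    intro i; ext y; simp only [Finset.mem_filter, Finset.mem_erase]; tauto
  have hsame : ∀ i : Fin n, i ≠ a x →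
      (X.erase x).filter (fun y => a y = i) = X.filter (fun y => a y = i) := by
    intro i hi
    rw [hfe i, Finset.erase_eq_of_notMem]
    simp only [Finset.mem_filter, not_and]
    intro _ h
    exact hi h.symm
  have hdiff : (∑ i : Fin n, fi i (X.filter (fun y => a y = i)))
      - (∑ i : Fin n, fi i ((X.erase x).filter (fun y => a y = i)))
      = fi (a x) S - fi (a x) (S.erase x) := by
    rw [← Finset.sum_sub_distrib, Fintype.sum_eq_single (a x)]
    · rw [hfe (a x)]
    · intro i hi
      rw [hsame i hi, sub_self]
  have hsub' : fi (a x) S - fi (a x) (S.erase x) ≤ fi (a x) {x} := by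
    have h := hsub (a x) {x} (S.erase x)
    have h1 : ({x} : Finset V) ∩ S.erase x = ∅ := by
      ext y
      simp only [Finset.mem_inter, Finset.mem_singleton, Finset.mem_erase,
        Finset.notMem_empty, iff_false]
      rintro ⟨rfl, h2, _⟩
      exact h2 rfl
    have h2 : ({x} : Finset V) ∪ S.erase x = S := by
      ext y
      simp only [Finset.mem_union, Finset.mem_singleton, Finset.mem_erase]
      constructor
      · rintro (rfl | ⟨-, h⟩)
        · exact hxS
        · exact h
      · intro hy
        by_cases hyx : y = x
        · exact Or.inl hyx
        · exact Or.inr ⟨hyx, hy⟩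
    rw [h1, h2, hempty, zero_add] at h
    linarith
  have hfin : fi (a x) {x} ≤ f {x} := by
    rw [hM]
    exact Finset.le_sup' (fun i : Fin n => fi i {x}) (Finset.mem_univ (a x))
  calc f X - f (X.erase x)
      ≤ (∑ i : Fin n, fi i (X.filter (fun y => a y = i)))
        - (∑ i : Fin n, fi i ((X.erase x).filter (fun y => a y = i))) := by
        rw [hXf]; linarith
    _ = fi (a x) S - fi (a x) (S.erase x) := hdiff
    _ ≤ fi (a x) {x} := hsub'
    _ ≤ f {x} := hfin
end

section
/- Let f₁, …, fₙ : 2^V → ℝ be monotone nondecreasing submodular functions with f_i(∅)=0 and f_i({x}) > 0 for all i and x, and let f(X) = max over partitions (X₁,…,Xₙ) of X of Σ_i f_i(X_i) be the aggregated valuation. Then for any X ⊆ V and x ∈ X, f(X) - f(X\{x}) ≥ min_i [(f_i(X) - f_i(X\{x}))/f_i({x})] · f({x}) ≥ (1 - κ(|X|)) · f({x}), where κ(s) = max_i κ_i(s) and κ_i is the curvature of f_i. -/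
/-- Lemma 6: lower bound on marginals of the aggregated valuation via the
minimum normalized marginal and the curvature. -/
theorem stmt13 {V : Type*} [DecidableEq V] [Fintype V] (n : ℕ) [NeZero n]
    (fi : Fin n → Finset V → ℝ)
    (hmono : ∀ i, ∀ X Y : Finset V, X ⊆ Y → fi i X ≤ fi i Y)
    (hsub : ∀ i, ∀ X Y : Finset V, fi i X + fi i Y ≥ fi i (X ∩ Y) + fi i (X ∪ Y))
    (hempty : ∀ i, fi i ∅ = 0)
    (hpos : ∀ i (x : V), 0 < fi i {x})
    (f : Finset V → ℝ)
    (hf : ∀ X : Finset V,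
      f X = (Finset.univ : Finset (V → Fin n)).sup' Finset.univ_nonempty
        (fun a => ∑ i : Fin n, fi i (X.filter (fun x => a x = i))))
    (X : Finset V) (x : V) (hx : x ∈ X)
    (κ : ℝ)
    (hκ : ∀ i, ∀ (Y : Finset V) (y : V), Y.card = X.card → y ∈ Y →
      (1 - κ) * fi i {y} ≤ fi i Y - fi i (Y.erase y)) :
    f X - f (X.erase x) ≥
      ((Finset.univ : Finset (Fin n)).inf' Finset.univ_nonempty
        (fun i => (fi i X - fi i (X.erase x)) / fi i {x})) * f {x} ∧
    ((Finset.univ : Finset (Fin n)).inf' Finset.univ_nonempty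
        (fun i => (fi i X - fi i (X.erase x)) / fi i {x})) * f {x} ≥
      (1 - κ) * f {x} := by
  set m := (Finset.univ : Finset (Fin n)).inf' Finset.univ_nonempty
        (fun i => (fi i X - fi i (X.erase x)) / fi i {x}) with hm
  -- sum for singleton
  have hsum : ∀ a : V → Fin n,
      (∑ i : Fin n, fi i (({x} : Finset V).filter (fun y => a y = i))) = fi (a x) {x} := by
    intro a
    have h1 : ∀ i : Fin n, fi i (({x} : Finset V).filter (fun y => a y = i))
        = if a x = i then fi i {x} else 0 := by
      intro i
      rw [Finset.filter_singleton]
      split <;> simp [hempty]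
    simp only [h1]
    simp
  obtain ⟨a₀, -, ha₀⟩ := Finset.exists_mem_eq_sup' (Finset.univ_nonempty)
    (fun a : V → Fin n => ∑ i : Fin n, fi i (({x} : Finset V).filter (fun y => a y = i)))
  set j := a₀ x with hj
  have hfx : f {x} = fi j {x} := by
    rw [hf {x}, ha₀, hsum]
  have hfxpos : 0 < f {x} := hfx ▸ hpos j x
  -- m ≤ ratio for j
  have hmj : m * f {x} ≤ fi j X - fi j (X.erase x) := by
    have h1 : m ≤ (fi j X - fi j (X.erase x)) / fi j {x} :=
      Finset.inf'_le _ (Finset.mem_univ j)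
    have := mul_le_mul_of_nonneg_right h1 (le_of_lt hfxpos)
    rw [hfx] at this ⊢
    calc m * fi j {x} ≤ (fi j X - fi j (X.erase x)) / fi j {x} * fi j {x} := this
      _ = fi j X - fi j (X.erase x) := div_mul_cancel₀ _ (ne_of_gt (hpos j x))
  -- main inequality: f X ≥ f (X.erase x) + (fi j X - fi j (X.erase x))
  obtain ⟨a, -, ha⟩ := Finset.exists_mem_eq_sup' (Finset.univ_nonempty)
    (fun a : V → Fin n => ∑ i : Fin n, fi i ((X.erase x).filter (fun y => a y = i)))
  set S : Fin n → Finset V := fun i => (X.erase x).filter (fun y => a y = i) with hS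
  set a' : V → Fin n := Function.update a x j with ha'
  have hT : ∀ i : Fin n, X.filter (fun y => a' y = i)
      = if i = j then insert x (S i) else S i := by
    intro i
    ext y
    by_cases hy : y = x
    · subst hy
      simp [ha', hS, Function.update_apply, hx]
      split <;> simp_all [eq_comm]
    · simp [ha', hS, Function.update_apply, hy]
      split <;> simp [hy] <;> tauto
  have hxS : x ∉ S j := by simp [hS]
  have key : f X ≥ f (X.erase x) + (fi j X - fi j (X.erase x)) := by
    have h1 : f X ≥ ∑ i : Fin n, fi i (X.filter (fun y => a' y = i)) := by
      rw [hf X, ge_iff_le]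
      exact Finset.le_sup' (fun a => ∑ i : Fin n, fi i (X.filter (fun y => a y = i))) (Finset.mem_univ a')
    have h2 : ∑ i : Fin n, fi i (X.filter (fun y => a' y = i))
        = (∑ i : Fin n, fi i (S i)) + (fi j (insert x (S j)) - fi j (S j)) := by
      simp only [hT]
      rw [← Finset.add_sum_erase _ _ (Finset.mem_univ j),
          ← Finset.add_sum_erase _ (fun i => fi i (S i)) (Finset.mem_univ j)]
      have : ∀ i ∈ Finset.univ.erase j,
          fi i (if i = j then insert x (S i) else S i) = fi i (S i) := by
        intro i hi
        rw [if_neg (Finset.ne_of_mem_erase hi)]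
      rw [Finset.sum_congr rfl this, if_pos rfl]
      ring
    have h3 : f (X.erase x) = ∑ i : Fin n, fi i (S i) := by
      rw [hf (X.erase x), ← ha]
    have h4 : fi j (insert x (S j)) - fi j (S j) ≥ fi j X - fi j (X.erase x) := by
      have hss : S j ⊆ X.erase x := Finset.filter_subset _ _
      have hcap : insert x (S j) ∩ (X.erase x) = S j := by
        rw [Finset.insert_inter_of_notMem (Finset.notMem_erase x X)]
        exact Finset.inter_eq_left.mpr hss
      have hcup : insert x (S j) ∪ (X.erase x) = X := by
        rw [Finset.insert_union, Finset.union_eq_right.mpr hss, Finset.insert_erase hx]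
      have := hsub j (insert x (S j)) (X.erase x)
      rw [hcap, hcup] at this
      linarith
    rw [h2] at h1
    linarith
  constructor
  · linarith
  · have hmge : m ≥ 1 - κ := by
      rw [hm]
      apply Finset.le_inf'
      intro i _
      rw [le_div_iff₀ (hpos i x)]
      exact hκ i X x rfl hx
    nlinarith [hfxpos]
end

section
/- (Collaborating buyers: stability of the priced set.) Let f be the aggregated valuation of monotone nondecreasing submodular functions f₁,…,fₙ with f_i(∅)=0 and f_i({x})>0, let X ⊆ V, and define prices p(x) = min_i [(f_i(X) - f_i(X\{x}))/f_i({x})] · f({x}) for x ∈ X and p(y) = +∞ for y ∉ X. Then f(X) - p(X) ≥ f(Y) - p(Y) for all Y ⊆ X. -/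
/-!
Removing an element `x` from a set `Z ⊆ X` costs the aggregated valuation at least `p(x)`:
take a partition of `Z \ {x}` that is optimal for `f` and add `x` to the part `T` of a buyer `k`
attaining `f({x}) = f_k({x})`. The gain `f_k(T ∪ {x}) - f_k(T)` is, by diminishing returns, at least
`f_k(X) - f_k(X \ {x}) ≥ p(x)`. Hence `Z ↦ f(Z) - p(Z)` does not decrease along `Z \ {x} ⊆ Z`,
and removing the elements of `X \ Y` one at a time gives the claim.
-/

open Finset

theorem marginal_le_marginal_of_submodular {V : Type*} [DecidableEq V] {g : Finset V → ℝ}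
    (hsub : ∀ X Y : Finset V, g X + g Y ≥ g (X ∩ Y) + g (X ∪ Y))
    {S X : Finset V} {x : V} (hSX : S ⊆ X) (hx : x ∈ S) :
    g X - g (X.erase x) ≤ g S - g (S.erase x) := by
  have h := hsub S (X.erase x)
  rw [inter_erase, inter_eq_left.2 hSX, union_erase_of_mem hx, union_eq_right.2 hSX] at h
  linarith

theorem sub_sum_le_sub_sum_of_le_marginal {V : Type*} [DecidableEq V] {g : Finset V → ℝ}
    {p : V → ℝ} {X : Finset V} (hmarg : ∀ Z ⊆ X, ∀ x ∈ Z, p x ≤ g Z - g (Z.erase x))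
    {Y : Finset V} (hYX : Y ⊆ X) : g Y - ∑ x ∈ Y, p x ≤ g X - ∑ x ∈ X, p x := by
  suffices h : ∀ W ⊆ X, g (X \ W) - ∑ x ∈ X \ W, p x ≤ g X - ∑ x ∈ X, p x by
    simpa only [Finset.sdiff_sdiff_eq_self hYX] using h (X \ Y) sdiff_subset
  intro W
  induction W using Finset.induction_on with
  | empty => simp
  | insert x W hxW ih =>
    intro hW
    have hxZ : x ∈ X \ W := mem_sdiff.2 ⟨hW (mem_insert_self x W), hxW⟩
    have hstep := hmarg (X \ W) sdiff_subset x hxZ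
    have hsum := add_sum_erase (X \ W) p hxZ
    rw [sdiff_insert]
    linarith [ih ((subset_insert x W).trans hW)]

theorem inf'_div_mul_le {ι : Type*} {s : Finset ι} (hs : s.Nonempty) (r w : ι → ℝ) {k : ι}
    (hk : k ∈ s) (hw : 0 < w k) : s.inf' hs (fun i => r i / w i) * w k ≤ r k :=
  (le_div_iff₀ hw).1 (inf'_le _ hk)

theorem sum_filter_singleton {V ι : Type*} [Fintype ι] [DecidableEq ι]
    {fi : ι → Finset V → ℝ} (hempty : ∀ i, fi i ∅ = 0) (a : V → ι) (x : V) :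
    ∑ i, fi i (({x} : Finset V).filter (fun y => a y = i)) = fi (a x) {x} := by
  simp only [filter_singleton]
  rw [sum_eq_single (a x) (fun i _ hi => by rw [if_neg (Ne.symm hi), hempty]) (by simp), if_pos rfl]

section AggregateValuation

variable {V ι : Type*} [DecidableEq V] [Fintype V] [Fintype ι] [DecidableEq ι] [Nonempty ι]

/-- `a : V → ι` encodes the partition of `X` into the parts `{x ∈ X | a x = i}`. -/
noncomputable def aggregateValuation (fi : ι → Finset V → ℝ) (X : Finset V) : ℝ :=
  (univ : Finset (V → ι)).sup' univ_nonempty (fun a => ∑ i, fi i (X.filter (fun x => a x = i)))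

theorem exists_aggregateValuation_singleton_eq {fi : ι → Finset V → ℝ}
    (hempty : ∀ i, fi i ∅ = 0) (x : V) : ∃ k, aggregateValuation fi {x} = fi k {x} := by
  obtain ⟨a, -, ha⟩ := exists_mem_eq_sup' (univ_nonempty (α := V → ι))
    (fun a => ∑ i, fi i (({x} : Finset V).filter (fun y => a y = i)))
  exact ⟨a x, by rw [aggregateValuation, ha, sum_filter_singleton hempty]⟩

theorem exists_aggregateValuation_erase_add_le (fi : ι → Finset V → ℝ) (k : ι)
    {Z : Finset V} {x : V} (hx : x ∈ Z) :
    ∃ T ⊆ Z.erase x, aggregateValuation fi (Z.erase x) + (fi k (insert x T) - fi k T) ≤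
      aggregateValuation fi Z := by
  obtain ⟨a, -, ha⟩ := exists_mem_eq_sup' (univ_nonempty (α := V → ι))
    (fun a => ∑ i, fi i ((Z.erase x).filter (fun y => a y = i)))
  refine ⟨(Z.erase x).filter (fun y => a y = k), filter_subset _ _, ?_⟩
  have hfilter : ∀ i, Z.filter (fun y => Function.update a x k y = i) =
      if k = i then insert x ((Z.erase x).filter (fun y => a y = i))
      else (Z.erase x).filter (fun y => a y = i) := by
    intro i
    have hrest : (Z.erase x).filter (fun y => Function.update a x k y = i) =
        (Z.erase x).filter (fun y => a y = i) :=
      filter_congr fun y hy => by rw [Function.update_of_ne (ne_of_mem_erase hy)]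
    conv_lhs => rw [← insert_erase hx, filter_insert, Function.update_self, hrest]
  have hgain : ∑ i, fi i (Z.filter (fun y => Function.update a x k y = i)) =
      ∑ i, fi i ((Z.erase x).filter (fun y => a y = i)) +
        (fi k (insert x ((Z.erase x).filter (fun y => a y = k))) -
          fi k ((Z.erase x).filter (fun y => a y = k))) := by
    rw [← sub_eq_iff_eq_add', ← sum_sub_distrib,
      sum_eq_single k (fun i _ hi => by rw [hfilter, if_neg (Ne.symm hi), sub_self]) (by simp),
      hfilter, if_pos rfl]
  rw [aggregateValuation, ha, ← hgain]
  exact le_sup' (fun b : V → ι => ∑ i, fi i (Z.filter (fun y => b y = i)))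
    (mem_univ (Function.update a x k))

theorem sub_erase_le_aggregateValuation_sub_erase {fi : ι → Finset V → ℝ}
    (hsub : ∀ i, ∀ X Y : Finset V, fi i X + fi i Y ≥ fi i (X ∩ Y) + fi i (X ∪ Y)) (k : ι)
    {X Z : Finset V} {x : V} (hZX : Z ⊆ X) (hx : x ∈ Z) :
    fi k X - fi k (X.erase x) ≤ aggregateValuation fi Z - aggregateValuation fi (Z.erase x) := by
  obtain ⟨T, hT, hgain⟩ := exists_aggregateValuation_erase_add_le fi k hx
  have hTX : insert x T ⊆ X := insert_subset (hZX hx) (hT.trans ((erase_subset x Z).trans hZX))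
  have hdim := marginal_le_marginal_of_submodular (hsub k) hTX (mem_insert_self x T)
  rw [erase_insert fun h => notMem_erase x Z (hT h)] at hdim
  linarith

end AggregateValuation

theorem stmt15_general {V : Type*} [DecidableEq V] [Fintype V] (n : ℕ) [NeZero n]
    (fi : Fin n → Finset V → ℝ)
    (hsub : ∀ i, ∀ X Y : Finset V, fi i X + fi i Y ≥ fi i (X ∩ Y) + fi i (X ∪ Y))
    (hempty : ∀ i, fi i ∅ = 0)
    (hpos : ∀ i (x : V), 0 < fi i {x})
    (f : Finset V → ℝ)
    (hf : ∀ X : Finset V,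
      f X = (Finset.univ : Finset (V → Fin n)).sup' Finset.univ_nonempty
        (fun a => ∑ i : Fin n, fi i (X.filter (fun x => a x = i))))
    (X : Finset V) (p : V → ℝ)
    (hp : ∀ x ∈ X, p x =
      ((Finset.univ : Finset (Fin n)).inf' Finset.univ_nonempty
        (fun i => (fi i X - fi i (X.erase x)) / fi i {x})) * f {x}) :
    ∀ Y : Finset V, Y ⊆ X →
      f X - ∑ x ∈ X, p x ≥ f Y - ∑ x ∈ Y, p x := by
  obtain rfl : f = aggregateValuation fi := funext hf
  intro Y hYX
  refine sub_sum_le_sub_sum_of_le_marginal (fun Z hZX x hx => ?_) hYX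
  obtain ⟨k, hk⟩ := exists_aggregateValuation_singleton_eq hempty x
  rw [hp x (hZX hx), hk]
  exact (inf'_div_mul_le _ _ _ (mem_univ k) (hpos k x)).trans
    (sub_erase_le_aggregateValuation_sub_erase hsub k hZX hx)

/-- Collaborating buyers: stability of the priced set. With prices
p(x) = min_i [(f_i(X)-f_i(X\x))/f_i({x})]·f({x}), the set X maximizes
f(Y) - p(Y) over all Y ⊆ X. -/
theorem stmt15 {V : Type*} [DecidableEq V] [Fintype V] (n : ℕ) [NeZero n]
    (fi : Fin n → Finset V → ℝ)
    (hmono : ∀ i, ∀ X Y : Finset V, X ⊆ Y → fi i X ≤ fi i Y)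
    (hsub : ∀ i, ∀ X Y : Finset V, fi i X + fi i Y ≥ fi i (X ∩ Y) + fi i (X ∪ Y))
    (hempty : ∀ i, fi i ∅ = 0)
    (hpos : ∀ i (x : V), 0 < fi i {x})
    (f : Finset V → ℝ)
    (hf : ∀ X : Finset V,
      f X = (Finset.univ : Finset (V → Fin n)).sup' Finset.univ_nonempty
        (fun a => ∑ i : Fin n, fi i (X.filter (fun x => a x = i))))
    (X : Finset V) (p : V → ℝ)
    (hp : ∀ x ∈ X, p x =
      ((Finset.univ : Finset (Fin n)).inf' Finset.univ_nonempty
        (fun i => (fi i X - fi i (X.erase x)) / fi i {x})) * f {x}) :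
    ∀ Y : Finset V, Y ⊆ X →
      f X - ∑ x ∈ X, p x ≥ f Y - ∑ x ∈ Y, p x :=
  stmt15_general n fi hsub hempty hpos f hf X p hp
end

section
/- (Multiple buyers: approximation guarantee.) Let f₁,…,fₙ : 2^V → ℝ be monotone nondecreasing submodular with f_i(∅)=0, f_i({x}) > 0, and let κ(s) = max_i κ_i(s) < 1. Suppose (p*, (X₁*,…,Xₙ*)) is stable, meaning f_i(X_i*) - p*(X_i*) ≥ f_i(Y) - p*(Y) for all i and Y ⊆ V, and the X_i* are pairwise disjoint with s* = |X₁* ∪ … ∪ Xₙ*|. Let X^{s*} be a set of s* elements with largest values max_i f_i({x}). Then Σ_i p*(X_i*) ≤ (1/(1-κ(s*))) · Σ_{x∈X^{s*}} max_j (f_j(X^{s*}) - f_j(X^{s*}\{x})). -/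
/-- Theorem 8 (multiple buyers: approximation guarantee). -/
theorem stmt17 {V : Type*} [DecidableEq V] [Fintype V] (n : ℕ) [NeZero n]
    (fi : Fin n → Finset V → ℝ)
    (hmono : ∀ i, ∀ X Y : Finset V, X ⊆ Y → fi i X ≤ fi i Y)
    (hsub : ∀ i, ∀ X Y : Finset V, fi i X + fi i Y ≥ fi i (X ∩ Y) + fi i (X ∪ Y))
    (hempty : ∀ i, fi i ∅ = 0)
    (hpos : ∀ i (x : V), 0 < fi i {x})
    (κ : ℝ) (hκlt : κ < 1)
    (pstar : V → ℝ) (Xstar : Fin n → Finset V)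
    (hdisj : ∀ i j, i ≠ j → Disjoint (Xstar i) (Xstar j))
    (hstable : ∀ i, ∀ Y : Finset V,
      fi i (Xstar i) - ∑ x ∈ Xstar i, pstar x ≥ fi i Y - ∑ x ∈ Y, pstar x)
    (sstar : ℕ) (hs : sstar = (Finset.univ.biUnion Xstar).card)
    (hκ : ∀ i, ∀ (X : Finset V) (x : V), X.card = sstar → x ∈ X →
      (1 - κ) * fi i {x} ≤ fi i X - fi i (X.erase x))
    (Xs : Finset V) (hXs : Xs.card = sstar)
    (hbest : ∀ Y : Finset V, Y.card = sstar →
      ∑ x ∈ Y, (Finset.univ : Finset (Fin n)).sup' Finset.univ_nonempty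
          (fun i => fi i {x}) ≤
        ∑ x ∈ Xs, (Finset.univ : Finset (Fin n)).sup' Finset.univ_nonempty
          (fun i => fi i {x})) :
    ∑ i : Fin n, ∑ x ∈ Xstar i, pstar x ≤
      (1 / (1 - κ)) *
        ∑ x ∈ Xs, (Finset.univ : Finset (Fin n)).sup' Finset.univ_nonempty
          (fun j => fi j Xs - fi j (Xs.erase x)) := by
  have h1κ : (0:ℝ) < 1 - κ := by linarith
  set M : V → ℝ := fun x => (Finset.univ : Finset (Fin n)).sup' Finset.univ_nonempty
      (fun i => fi i {x}) with hM
  have key1 : ∀ i, ∀ x ∈ Xstar i, pstar x ≤ fi i {x} := by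
    intro i x hx
    have hst := hstable i ((Xstar i).erase x)
    have hsum : ∑ y ∈ Xstar i, pstar y = pstar x + ∑ y ∈ (Xstar i).erase x, pstar y :=
      (Finset.add_sum_erase _ _ hx).symm
    have hsub' := hsub i ((Xstar i).erase x) {x}
    have hi : (Xstar i).erase x ∩ {x} = ∅ := by
      ext y; simp [Finset.mem_erase]
    have hu : (Xstar i).erase x ∪ {x} = Xstar i := by
      rw [Finset.union_comm, ← Finset.insert_eq, Finset.insert_erase hx]
    rw [hi, hu, hempty i] at hsub'
    linarith
  have key2 : ∑ i : Fin n, ∑ x ∈ Xstar i, pstar x ≤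
      ∑ x ∈ Finset.univ.biUnion Xstar, M x := by
    calc ∑ i : Fin n, ∑ x ∈ Xstar i, pstar x
        ≤ ∑ i : Fin n, ∑ x ∈ Xstar i, M x := by
          apply Finset.sum_le_sum
          intro i _
          apply Finset.sum_le_sum
          intro x hx
          exact le_trans (key1 i x hx)
            (Finset.le_sup' (fun j => fi j {x}) (Finset.mem_univ i))
      _ = ∑ x ∈ Finset.univ.biUnion Xstar, M x := by
          rw [Finset.sum_biUnion]
          intro i _ j _ hij
          exact hdisj i j hij
  have key3 : ∑ x ∈ Finset.univ.biUnion Xstar, M x ≤ ∑ x ∈ Xs, M x :=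
    hbest _ hs.symm
  have key4 : ∀ x ∈ Xs, M x ≤ (1 / (1 - κ)) *
      ((Finset.univ : Finset (Fin n)).sup' Finset.univ_nonempty
        (fun j => fi j Xs - fi j (Xs.erase x))) := by
    intro x hx
    rw [hM]
    rw [Finset.sup'_le_iff]
    intro i _
    rw [one_div, ← div_eq_inv_mul, le_div_iff₀ h1κ]
    calc fi i {x} * (1 - κ) = (1 - κ) * fi i {x} := by ring
      _ ≤ fi i Xs - fi i (Xs.erase x) := hκ i Xs x hXs hx
      _ ≤ _ := Finset.le_sup' (fun j => fi j Xs - fi j (Xs.erase x)) (Finset.mem_univ i)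
  calc ∑ i : Fin n, ∑ x ∈ Xstar i, pstar x ≤ ∑ x ∈ Xs, M x := le_trans key2 key3
    _ ≤ ∑ x ∈ Xs, (1 / (1 - κ)) *
        ((Finset.univ : Finset (Fin n)).sup' Finset.univ_nonempty
          (fun j => fi j Xs - fi j (Xs.erase x))) := Finset.sum_le_sum key4
    _ = _ := by rw [Finset.mul_sum]
end

section
/- (Multiple buyers: approximate stability of output.) Let f₁,…,fₙ be monotone nondecreasing submodular with f_i(∅)=0 and curvatures κ_i, let X^s ⊆ V with |X^s| = s, define prices p(x) = max_j (f_j(X^s) - f_j(X^s \ {x})) for x ∈ X^s and p(y) = +∞ otherwise, and let (X₁,…,Xₙ) be a partition of X^s such that p(x) = f_i(X^s) - f_i(X^s\{x}) for every x ∈ X_i. Then for every i: (a) f_i(X_i) - p(X_i) ≥ 0, and (b) for every X ⊆ X^s, (1 - κ_i(s)) f_i(X) - p(X) ≤ 0. Hence (p, (X₁,…,Xₙ)) is (1-κ(s))-stable with κ(s) = max_i κ_i(s). -/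
/-!
Part (a): by submodularity the marginal value of `x` in `Xˢ` is at most its marginal value
in any subset containing it, so the prices of the items in `Xᵢ` telescope to at most `fᵢ(Xᵢ)`.
Part (b): by the curvature bound, `(1 - κᵢ) fᵢ({x})` is at most the marginal value of `x` in `Xˢ`
for buyer `i`, hence at most `p(x)`; summing and using subadditivity of `fᵢ` gives the claim.
If `1 - κᵢ < 0`, monotonicity alone makes the left side nonpositive and the prices nonnegative.
-/

section Submodular

variable {V : Type*} [DecidableEq V] {f : Finset V → ℝ}

theorem marginal_le_marginal_of_insert_subset
    (hsub : ∀ X Y : Finset V, f X + f Y ≥ f (X ∩ Y) + f (X ∪ Y))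
    {X Y : Finset V} {a : V} (ha : a ∉ X) (hXY : insert a X ⊆ Y) :
    f Y - f (Y.erase a) ≤ f (insert a X) - f X := by
  have hunion : insert a X ∪ Y.erase a = Y := by
    ext y
    have := @hXY y
    grind
  have hinter : insert a X ∩ Y.erase a = X := by
    ext y
    have := @hXY y
    grind
  have := hsub (insert a X) (Y.erase a)
  rw [hunion, hinter] at this
  linarith

theorem sum_marginal_le_sub_empty
    (hsub : ∀ X Y : Finset V, f X + f Y ≥ f (X ∩ Y) + f (X ∪ Y))
    {X Y : Finset V} (hXY : X ⊆ Y) :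
    ∑ x ∈ X, (f Y - f (Y.erase x)) ≤ f X - f ∅ := by
  induction X using Finset.induction_on with
  | empty => simp
  | @insert a X ha ih =>
    rw [Finset.sum_insert ha]
    have hmarg := marginal_le_marginal_of_insert_subset hsub ha hXY
    have hsum := ih ((Finset.subset_insert a X).trans hXY)
    linarith

theorem le_sum_singleton
    (hsub : ∀ X Y : Finset V, f X + f Y ≥ f (X ∩ Y) + f (X ∪ Y))
    (hempty : f ∅ = 0) (X : Finset V) :
    f X ≤ ∑ x ∈ X, f {x} := by
  induction X using Finset.induction_on with
  | empty => simp [hempty]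
  | @insert a X ha ih =>
    rw [Finset.sum_insert ha]
    have := hsub {a} X
    rw [Finset.singleton_inter_of_notMem ha, ← Finset.insert_eq, hempty] at this
    linarith

theorem mul_le_sum_of_mul_singleton_le
    (hsub : ∀ X Y : Finset V, f X + f Y ≥ f (X ∩ Y) + f (X ∪ Y))
    (hempty : f ∅ = 0) {X : Finset V} (hX : 0 ≤ f X) {c : ℝ} {q : V → ℝ}
    (hq : ∀ x ∈ X, c * f {x} ≤ q x) (hq_nonneg : ∀ x ∈ X, 0 ≤ q x) :
    c * f X ≤ ∑ x ∈ X, q x := by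
  rcases le_or_gt 0 c with hc | hc
  · calc c * f X ≤ c * ∑ x ∈ X, f {x} :=
          mul_le_mul_of_nonneg_left (le_sum_singleton hsub hempty X) hc
      _ = ∑ x ∈ X, c * f {x} := Finset.mul_sum X _ c
      _ ≤ ∑ x ∈ X, q x := Finset.sum_le_sum hq
  · calc c * f X ≤ 0 := mul_nonpos_of_nonpos_of_nonneg hc.le hX
      _ ≤ ∑ x ∈ X, q x := Finset.sum_nonneg hq_nonneg

end Submodular

theorem stmt18_general {V : Type*} [DecidableEq V] (n : ℕ) [NeZero n]
    (fi : Fin n → Finset V → ℝ)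
    (hmono : ∀ i, ∀ X Y : Finset V, X ⊆ Y → fi i X ≤ fi i Y)
    (hsub : ∀ i, ∀ X Y : Finset V, fi i X + fi i Y ≥ fi i (X ∩ Y) + fi i (X ∪ Y))
    (hempty : ∀ i, fi i ∅ = 0)
    (s : ℕ) (Xs : Finset V) (hXs : Xs.card = s)
    (κ : Fin n → ℝ)
    (hκ : ∀ i, ∀ (X : Finset V) (x : V), X.card = s → x ∈ X →
      (1 - κ i) * fi i {x} ≤ fi i X - fi i (X.erase x))
    (p : V → ℝ)
    (hp : ∀ x ∈ Xs, p x = (Finset.univ : Finset (Fin n)).sup' Finset.univ_nonempty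
      (fun j => fi j Xs - fi j (Xs.erase x)))
    (Xi : Fin n → Finset V)
    (hpart1 : ∀ i, Xi i ⊆ Xs)
    (hprice : ∀ i, ∀ x ∈ Xi i, p x = fi i Xs - fi i (Xs.erase x)) :
    ∀ i : Fin n,
      (fi i (Xi i) - ∑ x ∈ Xi i, p x ≥ 0) ∧
      (∀ X : Finset V, X ⊆ Xs → (1 - κ i) * fi i X - ∑ x ∈ X, p x ≤ 0) := by
  intro i
  have hmarginal_le_price : ∀ x ∈ Xs, fi i Xs - fi i (Xs.erase x) ≤ p x := fun x hx =>
    (hp x hx).symm ▸ Finset.le_sup' (fun j => fi j Xs - fi j (Xs.erase x)) (Finset.mem_univ i)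
  refine ⟨?_, fun X hX => ?_⟩
  · have hsum := sum_marginal_le_sub_empty (hsub i) (hpart1 i)
    rw [Finset.sum_congr rfl (hprice i)]
    linarith [hempty i]
  · have hbound := mul_le_sum_of_mul_singleton_le (hsub i) (hempty i)
      (hempty i ▸ hmono i ∅ X X.empty_subset)
      (fun x hx => (hκ i Xs x hXs (hX hx)).trans (hmarginal_le_price x (hX hx)))
      (fun x hx => (sub_nonneg.2 (hmono i _ _ (Xs.erase_subset x))).trans
        (hmarginal_le_price x (hX hx)))
    linarith

/-- Theorem 8 (multiple buyers: approximate stability of the output). -/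
theorem stmt18 {V : Type*} [DecidableEq V] [Fintype V] (n : ℕ) [NeZero n]
    (fi : Fin n → Finset V → ℝ)
    (hmono : ∀ i, ∀ X Y : Finset V, X ⊆ Y → fi i X ≤ fi i Y)
    (hsub : ∀ i, ∀ X Y : Finset V, fi i X + fi i Y ≥ fi i (X ∩ Y) + fi i (X ∪ Y))
    (hempty : ∀ i, fi i ∅ = 0)
    (hpos : ∀ i (x : V), 0 < fi i {x})
    (s : ℕ) (Xs : Finset V) (hXs : Xs.card = s)
    (κ : Fin n → ℝ)
    (hκ : ∀ i, ∀ (X : Finset V) (x : V), X.card = s → x ∈ X →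
      (1 - κ i) * fi i {x} ≤ fi i X - fi i (X.erase x))
    (p : V → ℝ)
    (hp : ∀ x ∈ Xs, p x = (Finset.univ : Finset (Fin n)).sup' Finset.univ_nonempty
      (fun j => fi j Xs - fi j (Xs.erase x)))
    (Xi : Fin n → Finset V)
    (hpart1 : ∀ i, Xi i ⊆ Xs)
    (hpart2 : ∀ i j, i ≠ j → Disjoint (Xi i) (Xi j))
    (hpart3 : Finset.univ.biUnion Xi = Xs)
    (hprice : ∀ i, ∀ x ∈ Xi i, p x = fi i Xs - fi i (Xs.erase x)) :
    ∀ i : Fin n,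
      (fi i (Xi i) - ∑ x ∈ Xi i, p x ≥ 0) ∧
      (∀ X : Finset V, X ⊆ Xs → (1 - κ i) * fi i X - ∑ x ∈ X, p x ≤ 0) :=
  stmt18_general n fi hmono hsub hempty s Xs hXs κ hκ p hp Xi hpart1 hprice
end
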